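/- Let (R, m) be a commutative quasi-local ring with m^3 = 0. Then R satisfies (⋄) if and only if its associated graded ring gr(R) = R/m ⊕ m/m^2 ⊕ m^2 satisfies (⋄). -/

import Mathlib

/-!
For a local ring `(A, 𝔪)` with `𝔪³ = 0`, property (⋄) holds iff `A ⧸ (Q : 𝔪)` is Artinian for
every ideal `Q ⋖ 𝔪²`. If `A ⧸ (Q : 𝔪)` is not Artinian, an ideal `J ≤ Q : 𝔪` maximal among
those avoiding a generator `w` of `𝔪² / Q` makes `A ⧸ J` a cyclic module with essential simple
socle `A w̄` that is not Artinian. Conversely, if `A ⧸ I` has essential simple socle, then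
`(I + 𝔪²) / I` lies in the socle and `(I ∩ 𝔪²) : 𝔪 ≤ I + 𝔪²`, so `A ⧸ I` is Artinian.

The criterion only sees the ideals below `𝔪²` and, since `A ⧸ (Q : 𝔪)` is Artinian iff
`(𝔪/𝔪²) / ((Q : 𝔪)/𝔪²)` is, the product `𝔪/𝔪² × 𝔪/𝔪² → 𝔪²`. Both are the same for `R` and
`gr(R)`, the latter viewed as an `R`-algebra through its degree-zero part.
-/

open IsLocalRing

/-- Property (⋄) for a ring: every cyclic module with essential simple socle is
Artinian. -/
def HasDiamond (A : Type v) [Ring A] : Prop :=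
  ∀ I : Ideal A,
    (∃ S : Submodule A (A ⧸ I), IsSimpleModule A S ∧
      ∀ N : Submodule A (A ⧸ I), N ≠ ⊥ → S ⊓ N ≠ ⊥) →
    IsArtinian A (A ⧸ I)

theorem OrderIso.forall_covBy_iff {α β : Type*} [PartialOrder α] [PartialOrder β] {a : α}
    {b : β} (f : Set.Iic a ≃o Set.Iic b) {p : α → Prop} {q : β → Prop}
    (h : ∀ x : Set.Iic a, p x ↔ q (f x)) : (∀ x, x ⋖ a → p x) ↔ ∀ y, y ⋖ b → q y := by
  refine ⟨fun hp y hy => ?_, fun hq x hx => (h ⟨x, hx.le⟩).mpr (hq _ ?_)⟩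
  · obtain ⟨x, hx⟩ := f.surjective ⟨y, hy.le⟩
    have hxa : IsCoatom x := (f.isCoatom_iff x).mp (hx ▸ Set.Iic.isCoatom_iff.mpr hy)
    simpa [hx] using (h x).mp (hp x (Set.Iic.isCoatom_iff.mp hxa))
  · exact Set.Iic.isCoatom_iff.mp ((f.isCoatom_iff _).mpr (Set.Iic.isCoatom_iff.mpr hx))

namespace Submodule

variable {R M N : Type*} [Ring R] [AddCommGroup M] [Module R M] [AddCommGroup N] [Module R N]

theorem exists_sup_span_singleton_eq_of_covBy {Q N : Submodule R M} (h : Q ⋖ N) :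
    ∃ w ∈ N, w ∉ Q ∧ Q ⊔ R ∙ w = N := by
  obtain ⟨w, hw, hwQ⟩ := SetLike.exists_of_lt h.lt
  refine ⟨w, hw, hwQ, (h.eq_or_eq le_sup_left (sup_le h.le ?_)).resolve_left fun hQ => ?_⟩
  · exact (span_singleton_le_iff_mem w N).mpr hw
  · exact hwQ (hQ ▸ mem_sup_right (mem_span_singleton_self w))

theorem exists_maximal_le_notMem {P Q : Submodule R M} {w : M} (hQP : Q ≤ P) (hwQ : w ∉ Q) :
    ∃ J, Q ≤ J ∧ Maximal (fun J => J ≤ P ∧ w ∉ J) J :=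
  zorn_le_nonempty₀ {J | J ≤ P ∧ w ∉ J} (fun c hc hchain J hJ =>
    ⟨sSup c, ⟨sSup_le fun K hK => (hc hK).1, fun hw => by
      obtain ⟨K, hK, hwK⟩ := (mem_sSup_of_directed ⟨J, hJ⟩ hchain.directedOn).mp hw
      exact (hc hK).2 hwK⟩, fun _ => le_sSup⟩) Q ⟨hQP, hwQ⟩

noncomputable def quotientComapSubtypeEquivMapMkQ (I J : Submodule R M) :
    (J ⧸ I.comap J.subtype) ≃ₗ[R] J.map I.mkQ :=
  (quotEquivOfEq _ _ (by rw [LinearMap.ker_comp, ker_mkQ])).trans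
    ((I.mkQ ∘ₗ J.subtype).quotKerEquivRange.trans
      (LinearEquiv.ofEq _ _ (by rw [LinearMap.range_comp, range_subtype])))

theorem inf_covBy_of_isSimpleModule_map_mkQ {I J : Submodule R M}
    (h : IsSimpleModule R (J.map I.mkQ)) : I ⊓ J ⋖ J := by
  rw [covBy_iff_quot_is_simple inf_le_right, comap_inf, comap_subtype_self, inf_top_eq]
  exact IsSimpleModule.congr (quotientComapSubtypeEquivMapMkQ I J)

theorem isArtinian_quotient_of_isArtinian_map_mkQ {I J : Submodule R M}
    (hJ : IsArtinian R (J.map I.mkQ)) (hIJ : IsArtinian R (M ⧸ I ⊔ J)) :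
    IsArtinian R (M ⧸ I) :=
  (isArtinian_iff_submodule_quotient _).mpr
    ⟨hJ, (quotientQuotientEquivQuotientSup I J).isArtinian_iff.mpr hIJ⟩

theorem isArtinian_quotient_comap_iff {f : M →ₗ[R] N} (hf : Function.Surjective f)
    (U : Submodule R N) : IsArtinian R (M ⧸ U.comap f) ↔ IsArtinian R (N ⧸ U) := by
  have hker : LinearMap.ker (U.mkQ ∘ₗ f) = U.comap f := by
    rw [LinearMap.ker_comp, ker_mkQ]
  exact ((quotEquivOfEq _ _ hker.symm).trans
    ((U.mkQ ∘ₗ f).quotKerEquivOfSurjective (U.mkQ_surjective.comp hf))).isArtinian_iff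

end Submodule

section Module

variable {R M : Type*} [CommRing R] [AddCommGroup M] [Module R M]

/-- Submodules over `S` and over `R` coincide when `R` maps onto `S` modulo an ideal killing
`M`. -/
theorem isArtinian_iff_of_forall_sub_algebraMap_mem {S : Type*} [Ring S] [Algebra R S]
    [Module S M] [IsScalarTower R S M] {n : Ideal S}
    (hn : ∀ s : S, ∃ r : R, s - algebraMap R S r ∈ n) (hM : ∀ z ∈ n, ∀ x : M, z • x = 0) :
    IsArtinian S M ↔ IsArtinian R M := by
  have hsmul : ∀ s : S, ∃ r : R, ∀ x : M, s • x = r • x := fun s => by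
    obtain ⟨r, hr⟩ := hn s
    exact ⟨r, fun x => by rw [← algebraMap_smul S r x, ← sub_eq_zero, ← sub_smul, hM _ hr x]⟩
  let f : Submodule S M ≃o Submodule R M :=
    { toFun := Submodule.restrictScalars R
      invFun := fun N => ⟨N.toAddSubmonoid, fun s x hx => by
        obtain ⟨r, hr⟩ := hsmul s
        simpa [hr] using N.smul_mem r hx⟩
      left_inv := fun _ => rfl
      right_inv := fun _ => rfl
      map_rel_iff' := Iff.rfl }
  exact ⟨fun _ => f.symm.strictMono.wellFoundedLT, fun _ => f.strictMono.wellFoundedLT⟩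

theorem exists_smul_ne_zero_of_pow_eq_bot {m : Ideal R} {n : ℕ} (hm : m ^ n = ⊥) {x : M}
    (hx : x ≠ 0) : ∃ a : R, a • x ≠ 0 ∧ ∀ z ∈ m, z • a • x = 0 := by
  suffices ∀ n : ℕ, ∀ x : M, x ≠ 0 → (∀ a ∈ m ^ n, a • x = 0) →
      ∃ a : R, a • x ≠ 0 ∧ ∀ z ∈ m, z • a • x = 0 from
    this n x hx fun a ha => by rw [hm, Ideal.mem_bot] at ha; rw [ha, zero_smul]
  intro n
  induction n with
  | zero =>
    exact fun x hx hx0 => absurd (by simpa using hx0 1 (by simp [Ideal.one_eq_top])) hx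
  | succ n ih =>
    intro x hx hxn
    by_cases hmx : ∀ z ∈ m, z • x = 0
    · exact ⟨1, by simpa using hx, by simpa using hmx⟩
    push Not at hmx
    obtain ⟨z, hz, hzx⟩ := hmx
    obtain ⟨a, ha, ham⟩ := ih (z • x) hzx fun a ha => by
      rw [smul_smul]; exact hxn _ (pow_succ m n ▸ Ideal.mul_mem_mul ha hz)
    exact ⟨a * z, by rwa [mul_smul], by simpa [mul_smul] using ham⟩

end Module

section LocalRing

variable {A M : Type*} [CommRing A] [IsLocalRing A] [AddCommGroup M] [Module A M]

theorem isArtinian_quotient_of_maximalIdeal_le {J : Ideal A} (h : maximalIdeal A ≤ J) :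
    IsArtinian A (A ⧸ J) :=
  have := isSimpleModule_iff_isCoatom.mpr (maximalIdeal.isMaximal A).out
  isArtinian_of_surjective _ _ (Submodule.factor_surjective h)

theorem isArtinian_quotient_iff (C : Ideal A) :
    IsArtinian A (A ⧸ C) ↔
      IsArtinian A (maximalIdeal A ⧸ Submodule.comap (maximalIdeal A).subtype C) := by
  rw [isArtinian_iff_submodule_quotient (R := A) (Submodule.map C.mkQ (maximalIdeal A)),
    (C.quotientQuotientEquivQuotientSup _).isArtinian_iff,
    (C.quotientComapSubtypeEquivMapMkQ _).isArtinian_iff]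
  exact and_iff_left (isArtinian_quotient_of_maximalIdeal_le le_sup_right)

theorem isSimpleModule_span_singleton {q : M} (hq : q ≠ 0)
    (hmq : ∀ z ∈ maximalIdeal A, z • q = 0) : IsSimpleModule A (A ∙ q) := by
  have htor : maximalIdeal A = Ideal.torsionOf A M q := by
    refine (maximalIdeal.isMaximal A).eq_of_le (fun h => hq ?_)
      fun z hz => (Ideal.mem_torsionOf_iff q z).mpr (hmq z hz)
    rw [← one_smul A q]
    exact (Ideal.mem_torsionOf_iff q 1).mp (h ▸ Submodule.mem_top)
  have := isSimpleModule_iff_isCoatom.mpr (htor ▸ (maximalIdeal.isMaximal A).out)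
  exact IsSimpleModule.congr (Ideal.quotTorsionOfEquivSpanSingleton A M q).symm

theorem mem_of_essential {S₀ : Submodule A M} (hess : ∀ N : Submodule A M, N ≠ ⊥ → S₀ ⊓ N ≠ ⊥)
    {q : M} (hq : ∀ z ∈ maximalIdeal A, z • q = 0) : q ∈ S₀ := by
  by_cases hq0 : q = 0
  · exact hq0 ▸ S₀.zero_mem
  have hatom := isSimpleModule_iff_isAtom.mp (isSimpleModule_span_singleton hq0 hq)
  have hle := hatom.not_disjoint_iff_le.mp fun h => hess _ hatom.1 (disjoint_iff.mp h.symm)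
  exact hle (Submodule.mem_span_singleton_self q)

theorem span_singleton_inf_ne_bot {n : ℕ} (hm : maximalIdeal A ^ n = ⊥) {q : M}
    (hsoc : ∀ x : M, (∀ z ∈ maximalIdeal A, z • x = 0) → x ∈ A ∙ q) {N : Submodule A M}
    (hN : N ≠ ⊥) : (A ∙ q) ⊓ N ≠ ⊥ := by
  obtain ⟨y, hyN, hy⟩ := N.ne_bot_iff.mp hN
  obtain ⟨a, ha, ham⟩ := exists_smul_ne_zero_of_pow_eq_bot hm hy
  exact (Submodule.ne_bot_iff _).mpr ⟨a • y, ⟨hsoc _ ham, N.smul_mem a hyN⟩, ha⟩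

end LocalRing

section Diamond

variable {A : Type*} [CommRing A] [IsLocalRing A]

theorem mul_eq_zero_of_mem_pow_two (h3 : maximalIdeal A ^ 3 = ⊥) {u z : A}
    (hu : u ∈ maximalIdeal A ^ 2) (hz : z ∈ maximalIdeal A) : u * z = 0 := by
  rw [← Ideal.mem_bot, ← h3, pow_succ]
  exact Ideal.mul_mem_mul hu hz

theorem pow_two_le_colon (h3 : maximalIdeal A ^ 3 = ⊥) (Q : Ideal A) :
    maximalIdeal A ^ 2 ≤ Q.colon (maximalIdeal A) := fun u hu =>
  Submodule.mem_colon.mpr fun z hz => by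
    rw [smul_eq_mul, mul_eq_zero_of_mem_pow_two h3 hu hz]; exact Q.zero_mem

theorem exists_isSimpleModule_essential_of_socle {n : ℕ} (hn : maximalIdeal A ^ n = ⊥)
    {J : Ideal A} {w : A} (hwm : ∀ z ∈ maximalIdeal A, z * w ∈ J) (hwJ : w ∉ J)
    (hsoc : ∀ r : A, (∀ z ∈ maximalIdeal A, z * r ∈ J) → r ∈ J ⊔ Ideal.span {w}) :
    ∃ S : Submodule A (A ⧸ J), IsSimpleModule A S ∧
      ∀ N : Submodule A (A ⧸ J), N ≠ ⊥ → S ⊓ N ≠ ⊥ := by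
  have hmkQ : ∀ r z : A, z • J.mkQ r = 0 ↔ z * r ∈ J := fun r z => by
    rw [← LinearMap.map_smul, ← LinearMap.mem_ker, Submodule.ker_mkQ, smul_eq_mul]
  have hspan : Submodule.comap J.mkQ (A ∙ J.mkQ w) = J ⊔ Ideal.span {w} := by
    rw [← Submodule.comap_map_mkQ, Ideal.span, Submodule.map_span, Set.image_singleton]
  have hsocJ : ∀ x : A ⧸ J, (∀ z ∈ maximalIdeal A, z • x = 0) → x ∈ A ∙ J.mkQ w := by
    intro x hx
    obtain ⟨r, rfl⟩ := J.mkQ_surjective x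
    exact Submodule.mem_comap.mp (hspan ▸ hsoc r fun z hz => (hmkQ r z).mp (hx z hz))
  have hw0 : J.mkQ w ≠ 0 := by rwa [Ne, ← LinearMap.mem_ker, Submodule.ker_mkQ]
  exact ⟨A ∙ J.mkQ w, isSimpleModule_span_singleton hw0 fun z hz => (hmkQ w z).mpr (hwm z hz),
    fun _ hN => span_singleton_inf_ne_bot hn hsocJ hN⟩

theorem exists_le_colon_of_covBy (h3 : maximalIdeal A ^ 3 = ⊥) {Q : Ideal A}
    (hQ : Q ⋖ maximalIdeal A ^ 2) : ∃ (J : Ideal A) (w : A), J ≤ Q.colon (maximalIdeal A) ∧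
      (∀ z ∈ maximalIdeal A, z * w ∈ J) ∧ w ∉ J ∧
      ∀ r : A, (∀ z ∈ maximalIdeal A, z * r ∈ J) → r ∈ J ⊔ Ideal.span {w} := by
  set m := maximalIdeal A
  set P := Q.colon (m : Set A)
  obtain ⟨w, hw, hwQ, hQw⟩ := Submodule.exists_sup_span_singleton_eq_of_covBy hQ
  have hwm : ∀ a ∈ m, a * w = 0 := fun a ha => mul_comm w a ▸ mul_eq_zero_of_mem_pow_two h3 hw ha
  have hQP : Q ≤ P := fun q hq => Submodule.mem_colon.mpr fun z _ => Q.mul_mem_right z hq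
  obtain ⟨J, hQJ, hJ⟩ := Submodule.exists_maximal_le_notMem hQP hwQ
  obtain ⟨hJP, hwJ⟩ := hJ.prop
  have hJm2 : ∀ u ∈ m ^ 2, u ∈ J → u ∈ Q := by
    intro u hu huJ
    obtain ⟨q, hq, c, hc, rfl⟩ := Submodule.mem_sup.mp (hQw.ge hu)
    obtain ⟨a, rfl⟩ := Submodule.mem_span_singleton.mp hc
    by_cases ha : a ∈ m
    · simpa [hwm a ha] using hq
    · refine absurd ((Ideal.unit_mul_mem_iff_mem J (notMem_maximalIdeal.mp ha)).mp ?_) hwJ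
      simpa using J.sub_mem huJ (hQJ hq)
  have hPJ : ∀ x ∈ P, x ∈ J ⊔ Ideal.span {w} := by
    intro x hx
    by_cases hxJ : x ∈ J
    · exact Ideal.mem_sup_left hxJ
    have hw' : w ∈ J ⊔ Ideal.span {x} := by
      by_contra h
      exact hxJ (hJ.2 ⟨sup_le hJP ((Ideal.span_singleton_le_iff_mem _).mpr hx), h⟩ le_sup_left
        (Ideal.mem_sup_right (Ideal.mem_span_singleton_self x)))
    obtain ⟨j, hj, c, hc, hjc⟩ := Submodule.mem_sup.mp hw'
    obtain ⟨a, rfl⟩ := Ideal.mem_span_singleton'.mp hc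
    by_cases ha : a ∈ m
    · exact absurd (hjc ▸ J.add_mem hj (hQJ (mul_comm x a ▸ Submodule.mem_colon.mp hx a ha))) hwJ
    · refine (Ideal.unit_mul_mem_iff_mem _ (notMem_maximalIdeal.mp ha)).mp ?_
      rw [show a * x = w - j by rw [← hjc]; ring]
      exact sub_mem (Ideal.mem_sup_right (Ideal.mem_span_singleton_self w)) (Ideal.mem_sup_left hj)
  refine ⟨J, w, hJP, fun z hz => by simp [hwm z hz], hwJ, fun r hr => hPJ r ?_⟩
  have hrm : r ∈ m := by
    by_contra hrm
    exact hwJ ((Ideal.mul_unit_mem_iff_mem J (notMem_maximalIdeal.mp hrm)).mp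
      (hr w (Ideal.pow_le_self two_ne_zero hw)))
  exact Submodule.mem_colon.mpr fun z hz =>
    hJm2 _ (pow_two m ▸ Ideal.mul_mem_mul hrm hz) (by simpa [mul_comm] using hr z hz)

theorem HasDiamond.isArtinian_quotient_colon (hA : HasDiamond A) (h3 : maximalIdeal A ^ 3 = ⊥)
    {Q : Ideal A} (hQ : Q ⋖ maximalIdeal A ^ 2) :
    IsArtinian A (A ⧸ Q.colon (maximalIdeal A)) := by
  obtain ⟨J, w, hJP, hwm, hwJ, hsoc⟩ := exists_le_colon_of_covBy h3 hQ
  have := hA J (exists_isSimpleModule_essential_of_socle h3 hwm hwJ hsoc)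
  exact isArtinian_of_surjective _ _ (Submodule.factor_surjective hJP)

theorem hasDiamond_of_forall_covBy (h3 : maximalIdeal A ^ 3 = ⊥)
    (H : ∀ Q : Ideal A, Q ⋖ maximalIdeal A ^ 2 → IsArtinian A (A ⧸ Q.colon (maximalIdeal A))) :
    HasDiamond A := by
  set m := maximalIdeal A
  rintro I ⟨S₀, hS₀, hess⟩
  have hmkQ : ∀ r z : A, z • I.mkQ r = 0 ↔ z * r ∈ I := fun r z => by
    rw [← LinearMap.map_smul, ← LinearMap.mem_ker, Submodule.ker_mkQ, smul_eq_mul]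
  have hmap : ∀ J : Ideal A, (∀ j ∈ J, ∀ z ∈ m, z * j ∈ I) → Submodule.map I.mkQ J ≤ S₀ := by
    rintro J hJ _ ⟨j, hj, rfl⟩
    exact mem_of_essential hess fun z hz => (hmkQ j z).mpr (hJ j hj z hz)
  by_cases hm2 : m ^ 2 ≤ I
  · exact Submodule.isArtinian_quotient_of_isArtinian_map_mkQ (J := m) (isArtinian_of_le
      (hmap m fun j hj z hz => hm2 (pow_two m ▸ Ideal.mul_mem_mul hz hj)))
      (isArtinian_quotient_of_maximalIdeal_le le_sup_right)
  have hm2S₀ := hmap (m ^ 2) fun j hj z hz => by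
    rw [mul_comm, mul_eq_zero_of_mem_pow_two h3 hj hz]; exact I.zero_mem
  have hN : Submodule.map I.mkQ (m ^ 2) = S₀ :=
    ((isSimpleModule_iff_isAtom.mp hS₀).le_iff.mp hm2S₀).resolve_left fun h => hm2 <| by
      rw [← Submodule.ker_mkQ I, LinearMap.ker, ← Submodule.map_le_iff_le_comap, h]
  have hC : (I ⊓ m ^ 2).colon (m : Set A) ≤ I ⊔ m ^ 2 := by
    intro r hr
    rw [← Submodule.comap_map_mkQ, Submodule.mem_comap, hN]
    exact mem_of_essential hess fun z hz =>
      (hmkQ r z).mpr (mul_comm r z ▸ (Submodule.mem_colon.mp hr z hz).1)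
  have := H _ (Submodule.inf_covBy_of_isSimpleModule_map_mkQ (hN ▸ hS₀))
  exact Submodule.isArtinian_quotient_of_isArtinian_map_mkQ (isArtinian_of_le hm2S₀)
    (isArtinian_of_surjective _ _ (Submodule.factor_surjective hC))

theorem hasDiamond_iff_forall_covBy (h3 : maximalIdeal A ^ 3 = ⊥) :
    HasDiamond A ↔
      ∀ Q : Ideal A, Q ⋖ maximalIdeal A ^ 2 → IsArtinian A (A ⧸ Q.colon (maximalIdeal A)) :=
  ⟨fun hA _ hQ => hA.isArtinian_quotient_colon h3 hQ, hasDiamond_of_forall_covBy h3⟩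

theorem isArtinian_quotient_iff_of_pow_two_le {C : Ideal A} (hC : maximalIdeal A ^ 2 ≤ C) :
    IsArtinian A (A ⧸ C) ↔ IsArtinian A
      ((maximalIdeal A ⧸ Submodule.comap (maximalIdeal A).subtype (maximalIdeal A ^ 2)) ⧸
        (Submodule.comap (maximalIdeal A).subtype C).map (Submodule.mkQ _)) := by
  rw [isArtinian_quotient_iff,
    ← Submodule.isArtinian_quotient_comap_iff (Submodule.mkQ_surjective _),
    Submodule.comap_map_mkQ, sup_eq_right.mpr (Submodule.comap_mono hC)]

end Diamond

structure GrEquiv (R : Type*) [CommRing R] [IsLocalRing R] (S : Type*) [CommRing S] extends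
    S ≃+ (R ⧸ maximalIdeal R) ×
      (↥(maximalIdeal R) ⧸ Submodule.comap (maximalIdeal R).subtype (maximalIdeal R ^ 2)) ×
      ↥(maximalIdeal R ^ 2 : Ideal R) where
  map_one' : toAddEquiv 1 = (1, 0, 0)
  symm_mul_symm : ∀ (a b : R) (x x' : ↥(maximalIdeal R))
    (y y' : ↥(maximalIdeal R ^ 2 : Ideal R)),
    toAddEquiv.symm (Ideal.Quotient.mk _ a, Submodule.Quotient.mk x, y) *
      toAddEquiv.symm (Ideal.Quotient.mk _ b, Submodule.Quotient.mk x', y') =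
    toAddEquiv.symm (Ideal.Quotient.mk _ (a * b), Submodule.Quotient.mk (a • x' + b • x),
      ⟨a * y' + b * y + x * x', add_mem (add_mem (Ideal.mul_mem_left _ _ y'.2)
        (Ideal.mul_mem_left _ _ y.2)) (pow_two (maximalIdeal R) ▸ Ideal.mul_mem_mul x.2 x'.2)⟩)

namespace GrEquiv

variable {R S : Type*} [CommRing R] [IsLocalRing R] [CommRing S] (g : GrEquiv R S)

local notation "𝔪" => maximalIdeal R

def triple (a : R) (x : 𝔪) (y : ↥(𝔪 ^ 2)) : S :=
  g.symm (Ideal.Quotient.mk _ a, Submodule.Quotient.mk x, y)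

@[simp]
theorem apply_triple (a : R) (x : 𝔪) (y : ↥(𝔪 ^ 2)) :
    g.toAddEquiv (g.triple a x y) = (Ideal.Quotient.mk _ a, Submodule.Quotient.mk x, y) :=
  g.apply_symm_apply _

theorem exists_triple_eq (s : S) : ∃ a x y, g.triple a x y = s := by
  obtain ⟨a, ha⟩ := Ideal.Quotient.mk_surjective (g.toAddEquiv s).1
  obtain ⟨x, hx⟩ := Submodule.Quotient.mk_surjective _ (g.toAddEquiv s).2.1
  exact ⟨a, x, (g.toAddEquiv s).2.2, by simp [triple, ha, hx]⟩

theorem triple_add (a a' : R) (x x' : 𝔪) (y y' : ↥(𝔪 ^ 2)) :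
    g.triple a x y + g.triple a' x' y' = g.triple (a + a') (x + x') (y + y') := by
  simp only [triple, ← map_add, Prod.mk_add_mk, Submodule.Quotient.mk_add]

theorem triple_zero : g.triple 0 0 0 = 0 := by
  simp [triple]

theorem triple_eq_add (a : R) (x : 𝔪) (y : ↥(𝔪 ^ 2)) :
    g.triple a x y = g.triple a 0 0 + g.triple 0 x y := by
  rw [triple_add]; simp

theorem triple_mul (a b : R) (x x' : 𝔪) (y y' : ↥(𝔪 ^ 2)) :
    g.triple a x y * g.triple b x' y' = g.triple (a * b) (a • x' + b • x)
      ⟨a * y' + b * y + x * x', add_mem (add_mem (Ideal.mul_mem_left _ _ y'.2)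
        (Ideal.mul_mem_left _ _ y.2)) (pow_two 𝔪 ▸ Ideal.mul_mem_mul x.2 x'.2)⟩ :=
  g.symm_mul_symm a b x x' y y'

theorem triple_mul_triple_zero_zero (a : R) (x : 𝔪) (y y' : ↥(𝔪 ^ 2)) :
    g.triple a x y * g.triple 0 0 y' = g.triple 0 0 (a • y') := by
  rw [triple_mul]
  congr 1 <;> simp
  rfl

theorem triple_zero_zero_mul_triple (a b : R) (x : 𝔪) (y : ↥(𝔪 ^ 2)) :
    g.triple a 0 0 * g.triple b x y = g.triple (a * b) (a • x) (a • y) := by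
  rw [triple_mul]
  congr 1 <;> simp
  rfl

theorem triple_zero_mul_triple_zero (x x' : 𝔪) (y y' : ↥(𝔪 ^ 2)) :
    g.triple 0 x y * g.triple 0 x' y' =
      g.triple 0 0 ⟨x * x', pow_two 𝔪 ▸ Ideal.mul_mem_mul x.2 x'.2⟩ := by
  rw [triple_mul]
  congr 1 <;> simp

def residue : S →+* R ⧸ 𝔪 where
  toFun s := (g.toAddEquiv s).1
  map_one' := by simp [g.map_one']
  map_mul' s t := by
    obtain ⟨a, x, y, rfl⟩ := g.exists_triple_eq s
    obtain ⟨b, x', y', rfl⟩ := g.exists_triple_eq t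
    simp [triple_mul]
  map_zero' := by simp
  map_add' := by simp

@[simp]
theorem residue_triple (a : R) (x : 𝔪) (y : ↥(𝔪 ^ 2)) :
    g.residue (g.triple a x y) = Ideal.Quotient.mk _ a := by
  simp [residue]

theorem residue_surjective : Function.Surjective g.residue := fun a => by
  obtain ⟨a, rfl⟩ := Ideal.Quotient.mk_surjective a
  exact ⟨g.triple a 0 0, g.residue_triple a 0 0⟩

theorem mem_ker_residue {s : S} : s ∈ RingHom.ker g.residue ↔ ∃ x y, g.triple 0 x y = s := by
  constructor
  · intro hs
    obtain ⟨a, x, y, rfl⟩ := g.exists_triple_eq s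
    rw [RingHom.mem_ker, residue_triple] at hs
    exact ⟨x, y, by simp [triple, hs]⟩
  · rintro ⟨x, y, rfl⟩
    simp

def degZero : R →+* S where
  toFun a := g.triple a 0 0
  map_one' := by simp [triple, ← g.map_one']
  map_mul' a b := by rw [triple_zero_zero_mul_triple, smul_zero, smul_zero]
  map_zero' := g.triple_zero
  map_add' a b := by rw [triple_add]; simp

def degTwo (Q : Ideal R) : Ideal S where
  carrier := {s | ∃ y : ↥(𝔪 ^ 2), (y : R) ∈ Q ∧ g.triple 0 0 y = s}
  add_mem' := by
    rintro _ _ ⟨y, hy, rfl⟩ ⟨y', hy', rfl⟩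
    exact ⟨y + y', Q.add_mem hy hy', by rw [triple_add]; simp⟩
  zero_mem' := ⟨0, Q.zero_mem, g.triple_zero⟩
  smul_mem' := by
    rintro c _ ⟨y, hy, rfl⟩
    obtain ⟨a, x, y', rfl⟩ := g.exists_triple_eq c
    exact ⟨a • y, Q.mul_mem_left a hy, (g.triple_mul_triple_zero_zero a x y' y).symm⟩

theorem triple_mem_degTwo {Q : Ideal R} {y : ↥(𝔪 ^ 2)} :
    g.triple 0 0 y ∈ g.degTwo Q ↔ (y : R) ∈ Q := by
  refine ⟨fun ⟨y', hy', h⟩ => ?_, fun hy => ⟨y, hy, rfl⟩⟩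
  have : y' = y := by simpa using congrArg (fun s => (g.toAddEquiv s).2.2) h
  exact this ▸ hy'

theorem sq_ker_residue : RingHom.ker g.residue ^ 2 = g.degTwo ⊤ := by
  apply le_antisymm
  · rw [pow_two, Ideal.mul_le]
    intro s hs t ht
    obtain ⟨x, y, rfl⟩ := g.mem_ker_residue.mp hs
    obtain ⟨x', y', rfl⟩ := g.mem_ker_residue.mp ht
    rw [triple_zero_mul_triple_zero]
    exact g.triple_mem_degTwo.mpr trivial
  · have key : ∀ r (hr : r ∈ 𝔪 * 𝔪),
        g.triple 0 0 ⟨r, pow_two 𝔪 ▸ hr⟩ ∈ RingHom.ker g.residue ^ 2 := by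
      intro r hr
      induction hr using Submodule.mul_induction_on' with
      | mem_mul_mem x hx x' hx' =>
        rw [pow_two, ← g.triple_zero_mul_triple_zero ⟨x, hx⟩ ⟨x', hx'⟩ 0 0]
        exact Ideal.mul_mem_mul (g.mem_ker_residue.mpr ⟨_, _, rfl⟩)
          (g.mem_ker_residue.mpr ⟨_, _, rfl⟩)
      | add u hu v hv hu' hv' =>
        convert add_mem hu' hv' using 1
        rw [triple_add]; simp
    rintro _ ⟨⟨y, hy⟩, -, rfl⟩
    exact key y (pow_two 𝔪 ▸ hy)

theorem ker_residue_pow_three : RingHom.ker g.residue ^ 3 = ⊥ := by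
  rw [pow_succ, sq_ker_residue, eq_bot_iff, Ideal.mul_le]
  rintro _ ⟨y, -, rfl⟩ t ht
  obtain ⟨x', y', rfl⟩ := g.mem_ker_residue.mp ht
  rw [mul_comm, triple_mul_triple_zero_zero, zero_smul, triple_zero]
  exact Submodule.zero_mem _

theorem isUnit_of_residue_ne_zero {s : S} (hs : g.residue s ≠ 0) : IsUnit s := by
  obtain ⟨a, x, y, rfl⟩ := g.exists_triple_eq s
  have ha : IsUnit a := notMem_maximalIdeal.mp <| by
    simpa [Ideal.Quotient.eq_zero_iff_mem] using hs
  have hnil : IsNilpotent (g.triple 0 x y) := ⟨3, by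
    rw [← Ideal.mem_bot, ← g.ker_residue_pow_three]
    exact Ideal.pow_mem_pow (g.mem_ker_residue.mpr ⟨x, y, rfl⟩) 3⟩
  rw [triple_eq_add]
  exact hnil.isUnit_add_left_of_commute (ha.map g.degZero) (Commute.all _ _)

theorem isLocalRing (g : GrEquiv R S) : IsLocalRing S :=
  have : Nontrivial S := g.residue.domain_nontrivial
  .of_isUnit_or_isUnit_one_sub_self fun s => by
    by_cases hs : g.residue s = 0
    · exact .inr (g.isUnit_of_residue_ne_zero (by simp [hs]))
    · exact .inl (g.isUnit_of_residue_ne_zero hs)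

theorem maximalIdeal_eq [IsLocalRing S] : maximalIdeal S = RingHom.ker g.residue :=
  letI := Ideal.Quotient.field 𝔪
  (eq_maximalIdeal (RingHom.ker_isMaximal_of_surjective _ g.residue_surjective)).symm

theorem maximalIdeal_pow_three (g : GrEquiv R S) [IsLocalRing S] : maximalIdeal S ^ 3 = ⊥ :=
  g.maximalIdeal_eq ▸ g.ker_residue_pow_three

def ofDegTwo (Q : Ideal S) : Ideal R where
  carrier := {r | ∃ h : r ∈ 𝔪 ^ 2, g.triple 0 0 ⟨r, h⟩ ∈ Q}
  add_mem' := by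
    rintro r r' ⟨hr, hrQ⟩ ⟨hr', hr'Q⟩
    refine ⟨add_mem hr hr', ?_⟩
    convert Q.add_mem hrQ hr'Q using 1
    rw [triple_add]; simp
  zero_mem' := ⟨zero_mem _, g.triple_zero ▸ Q.zero_mem⟩
  smul_mem' := by
    rintro c r ⟨hr, hrQ⟩
    refine ⟨Ideal.mul_mem_left _ c hr, ?_⟩
    exact g.triple_mul_triple_zero_zero c 0 0 ⟨r, hr⟩ ▸ Q.mul_mem_left _ hrQ

def degTwoOrderIso : Set.Iic (𝔪 ^ 2) ≃o Set.Iic (g.degTwo ⊤) :=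
  Equiv.toOrderIso
    { toFun := fun Q => ⟨g.degTwo Q, fun _ ⟨y, _, hy⟩ => ⟨y, trivial, hy⟩⟩
      invFun := fun Q => ⟨g.ofDegTwo Q, fun _ ⟨hr, _⟩ => hr⟩
      left_inv := fun Q => Subtype.ext <| Ideal.ext fun r =>
        ⟨fun ⟨_, hr⟩ => g.triple_mem_degTwo.mp hr,
          fun hr => ⟨Q.2 hr, g.triple_mem_degTwo.mpr hr⟩⟩
      right_inv := fun Q => Subtype.ext <| Ideal.ext fun s =>
        ⟨fun ⟨_, ⟨_, hy⟩, hs⟩ => hs ▸ hy, fun hs => by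
          obtain ⟨y, -, rfl⟩ := Q.2 hs
          exact ⟨y, ⟨y.2, hs⟩, rfl⟩⟩ }
    (fun _ _ h _ ⟨y, hy, hs⟩ => ⟨y, h hy, hs⟩) (fun _ _ h _ ⟨hr, hrQ⟩ => ⟨hr, h hrQ⟩)

theorem triple_mem_colon_iff {Q : Ideal R} {x : 𝔪} {y : ↥(𝔪 ^ 2)} :
    g.triple 0 x y ∈ (g.degTwo Q).colon (RingHom.ker g.residue : Set S) ↔
      (x : R) ∈ Q.colon (𝔪 : Set R) := by
  simp only [Submodule.mem_colon, smul_eq_mul]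
  constructor
  · intro h x' hx'
    have := h (g.triple 0 ⟨x', hx'⟩ 0) (g.mem_ker_residue.mpr ⟨_, _, rfl⟩)
    rwa [triple_zero_mul_triple_zero, triple_mem_degTwo] at this
  · intro h t ht
    obtain ⟨x', y', rfl⟩ := g.mem_ker_residue.mp ht
    rw [triple_zero_mul_triple_zero, triple_mem_degTwo]
    exact h x' x'.2

theorem isArtinian_quotient_colon_degTwo_iff [IsLocalRing S] (h3 : 𝔪 ^ 3 = ⊥) (Q : Ideal R) :
    IsArtinian S (S ⧸ (g.degTwo Q).colon (maximalIdeal S)) ↔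
      IsArtinian R ((↥𝔪 ⧸ Submodule.comap (𝔪).subtype (𝔪 ^ 2)) ⧸
        (Submodule.comap (𝔪).subtype (Q.colon 𝔪)).map (Submodule.mkQ _)) := by
  rw [isArtinian_quotient_iff, g.maximalIdeal_eq]
  let _ : Algebra R S := g.degZero.toAlgebra
  set K := RingHom.ker g.residue
  set C := (g.degTwo Q).colon (K : Set S)
  let ρ : K →ₗ[R] ↥𝔪 ⧸ Submodule.comap (𝔪).subtype (𝔪 ^ 2) :=
    { toFun := fun s => (g.toAddEquiv s).2.1
      map_add' := by simp
      map_smul' := fun a ⟨s, _⟩ => by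
        obtain ⟨b, x, y, rfl⟩ := g.exists_triple_eq s
        simp [Algebra.smul_def, RingHom.algebraMap_toAlgebra, degZero,
          triple_zero_zero_mul_triple] }
  have hρ : Function.Surjective ρ := fun v => by
    obtain ⟨x, rfl⟩ := Submodule.Quotient.mk_surjective _ v
    exact ⟨⟨g.triple 0 x 0, g.mem_ker_residue.mpr ⟨x, 0, rfl⟩⟩, by simp [ρ]⟩
  have hC : (Submodule.comap K.subtype C).restrictScalars R =
      ((Submodule.comap (𝔪).subtype (Q.colon 𝔪)).map (Submodule.mkQ _)).comap ρ := by
    ext ⟨s, hs⟩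
    obtain ⟨x, y, rfl⟩ := g.mem_ker_residue.mp hs
    rw [Submodule.restrictScalars_mem, Submodule.mem_comap, Submodule.mem_comap,
      Submodule.subtype_apply, g.triple_mem_colon_iff,
      show ρ ⟨_, hs⟩ = Submodule.mkQ _ x by simp [ρ], ← Submodule.mem_comap,
      Submodule.comap_map_mkQ, sup_eq_right.mpr (Submodule.comap_mono (pow_two_le_colon h3 Q))]
    rfl
  have hK : ∀ z ∈ K, ∀ t : ↥K ⧸ Submodule.comap K.subtype C, z • t = 0 := by
    intro z hz t
    obtain ⟨t, rfl⟩ := Submodule.Quotient.mk_surjective _ t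
    have hK2 := pow_two_le_colon g.maximalIdeal_pow_three (g.degTwo Q)
    rw [g.maximalIdeal_eq] at hK2
    exact (Submodule.Quotient.mk_eq_zero _).mpr (hK2 (pow_two K ▸ Ideal.mul_mem_mul hz t.2))
  have hdeg : ∀ s : S, ∃ a : R, s - algebraMap R S a ∈ K := fun s => by
    obtain ⟨a, x, y, rfl⟩ := g.exists_triple_eq s
    exact ⟨a, g.mem_ker_residue.mpr ⟨x, y, (sub_eq_of_eq_add' (g.triple_eq_add a x y)).symm⟩⟩
  rw [isArtinian_iff_of_forall_sub_algebraMap_mem hdeg hK,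
    ← (Submodule.Quotient.restrictScalarsEquiv R _).isArtinian_iff, hC,
    Submodule.isArtinian_quotient_comap_iff hρ]

theorem forall_covBy_iff (g : GrEquiv R S) [IsLocalRing S] (h3 : 𝔪 ^ 3 = ⊥) :
    (∀ Q : Ideal R, Q ⋖ 𝔪 ^ 2 → IsArtinian R (R ⧸ Q.colon 𝔪)) ↔
      ∀ Q : Ideal S, Q ⋖ maximalIdeal S ^ 2 → IsArtinian S (S ⧸ Q.colon (maximalIdeal S)) := by
  rw [show maximalIdeal S ^ 2 = g.degTwo ⊤ by rw [g.maximalIdeal_eq, sq_ker_residue]]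
  exact g.degTwoOrderIso.forall_covBy_iff fun Q =>
    (isArtinian_quotient_iff_of_pow_two_le (pow_two_le_colon h3 Q)).trans
      (g.isArtinian_quotient_colon_degTwo_iff h3 Q).symm

end GrEquiv

/-- Let `(R, 𝔪)` be a commutative quasi-local ring with `𝔪³ = 0`.  Then `R` satisfies
(⋄) if and only if its associated graded ring `gr(R) = R/𝔪 ⊕ 𝔪/𝔪² ⊕ 𝔪²` does.
Here the associated graded ring is presented as any commutative ring `S` equipped with
an additive isomorphism `e : S ≃+ (R/𝔪) × (𝔪/𝔪²) × 𝔪²` sending `1` to `(1,0,0)` and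
transporting the graded multiplication
`(a₀,a₁,a₂)(b₀,b₁,b₂) = (a₀b₀, a₀b₁ + b₀a₁, a₀b₂ + b₀a₂ + a₁b₁)`. -/
theorem diamond_iff_gr_diamond (R : Type u) [CommRing R] [IsLocalRing R]
    (hm3 : maximalIdeal R ^ 3 = ⊥)
    (S : Type u) [CommRing S]
    (e : S ≃+ (R ⧸ maximalIdeal R) ×
      (↥(maximalIdeal R) ⧸
        (Submodule.comap (maximalIdeal R).subtype (maximalIdeal R ^ 2))) ×
      ↥(maximalIdeal R ^ 2 : Ideal R))
    (he1 : e 1 = (1, 0, 0))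
    (hemul : ∀ (a b : R) (x x' : ↥(maximalIdeal R))
      (y y' : ↥(maximalIdeal R ^ 2 : Ideal R)),
      e.symm (Ideal.Quotient.mk (maximalIdeal R) a, Submodule.Quotient.mk x, y) *
        e.symm (Ideal.Quotient.mk (maximalIdeal R) b, Submodule.Quotient.mk x', y') =
      e.symm (Ideal.Quotient.mk (maximalIdeal R) (a * b),
        Submodule.Quotient.mk (a • x' + b • x),
        ⟨a * ↑y' + b * ↑y + ↑x * ↑x', by
          refine add_mem (add_mem (Ideal.mul_mem_left _ _ y'.2)
            (Ideal.mul_mem_left _ _ y.2)) ?_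
          rw [pow_two]
          exact Ideal.mul_mem_mul x.2 x'.2⟩)) :
    HasDiamond R ↔ HasDiamond S := by
  let g : GrEquiv R S := ⟨e, he1, hemul⟩
  have := g.isLocalRing
  rw [hasDiamond_iff_forall_covBy hm3, hasDiamond_iff_forall_covBy g.maximalIdeal_pow_three]
  exact g.forall_covBy_iff hm3
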